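/- Let f = ‖μ_c‖² on ℂᴺ × ℂᴺ. Then for all (x,y) ∈ ℂᴺ × ℂᴺ one has ‖∇f(x,y)‖² = 4·Σ_{j=1}^N (|x_j|² + |y_j|²)·|⟨β_j, μ_c(x,y)⟩|², where ⟨β_j, μ_c(x,y)⟩ = Σ_{a=1}^r (β_j)_a·μ_c(x,y)_a ∈ ℂ. Consequently, (x,y) is a critical point of f if and only if for every j = 1, …, N either (x_j, y_j) = (0,0) or ⟨β_j, μ_c(x,y)⟩ = 0. -/

import Mathlib

/-!
Write `z = (x, y)`. The moment map `μ(z) = ∑ⱼ xⱼ yⱼ βⱼ - α` is a complex quadratic map with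
derivative `D v = ∑ⱼ (xⱼ v_{yⱼ} + yⱼ v_{xⱼ}) βⱼ`, and the adjoint of `D` sends `m` to the vector
with coordinates `(⟨βⱼ, m⟩ ȳⱼ, ⟨βⱼ, m⟩ x̄ⱼ)`. Hence `∇‖μ‖² = 2 D*μ(z)` has the coordinates
`(2 ⟨βⱼ, μ(z)⟩ ȳⱼ, 2 ⟨βⱼ, μ(z)⟩ x̄ⱼ)`, and both the norm formula and the description of the
critical points are read off coordinatewise.
-/

open scoped ComplexConjugate InnerProductSpace

theorem HasFDerivAt.hasGradientAt_norm_sq {E F : Type*} [NormedAddCommGroup E]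
    [InnerProductSpace ℝ E] [CompleteSpace E] [NormedAddCommGroup F] [InnerProductSpace ℝ F]
    {μ : E → F} {D : E →L[ℝ] F} {z g : E} (hμ : HasFDerivAt μ D z)
    (hg : ∀ v, ⟪g, v⟫_ℝ = 2 * ⟪μ z, D v⟫_ℝ) :
    HasGradientAt (fun w => ‖μ w‖ ^ 2) g z := by
  have hdual : InnerProductSpace.toDual ℝ E g = 2 • (innerSL ℝ (μ z)).comp D :=
    ContinuousLinearMap.ext fun v => by simp [hg]
  rw [hasGradientAt_iff_hasFDerivAt, hdual]
  exact hμ.norm_sq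

theorem EuclideanSpace.real_inner_eq_re_inner {κ : Type*} [Fintype κ]
    (u v : EuclideanSpace ℂ κ) : ⟪u, v⟫_ℝ = (⟪u, v⟫_ℂ).re := by
  simp [PiLp.inner_apply, Complex.inner, Complex.re_sum]

namespace Hypertoric

open Sum

variable {ι F : Type*} [NormedAddCommGroup F] [InnerProductSpace ℂ F]

def conjSwapSMul (c : ι → ℂ) (z : EuclideanSpace ℂ (ι ⊕ ι)) : EuclideanSpace ℂ (ι ⊕ ι) :=
  WithLp.toLp 2 (Sum.elim (fun j => c j * conj (z (inr j))) (fun j => c j * conj (z (inl j))))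

theorem conjSwapSMul_eq_zero_iff (c : ι → ℂ) (z : EuclideanSpace ℂ (ι ⊕ ι)) :
    conjSwapSMul c z = 0 ↔ ∀ j, (z (inl j) = 0 ∧ z (inr j) = 0) ∨ c j = 0 := by
  simp only [conjSwapSMul, WithLp.toLp_eq_zero, funext_iff, Pi.zero_apply, Sum.forall, elim_inl,
    elim_inr, mul_eq_zero, map_eq_zero]
  rw [← forall_and]
  exact forall_congr' fun j => by tauto

variable [Fintype ι]

theorem norm_sq_conjSwapSMul (c : ι → ℂ) (z : EuclideanSpace ℂ (ι ⊕ ι)) :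
    ‖conjSwapSMul c z‖ ^ 2 = ∑ j, (‖z (inl j)‖ ^ 2 + ‖z (inr j)‖ ^ 2) * ‖c j‖ ^ 2 := by
  rw [EuclideanSpace.norm_sq_eq, Fintype.sum_sum_type, ← Finset.sum_add_distrib]
  refine Finset.sum_congr rfl fun j _ => ?_
  simp only [conjSwapSMul, PiLp.toLp_apply, elim_inl, elim_inr, norm_mul, RCLike.norm_conj]
  ring

def momentMap (b : ι → F) (α : F) (z : EuclideanSpace ℂ (ι ⊕ ι)) : F :=
  ∑ j, (z (inl j) * z (inr j)) • b j - α

noncomputable def momentMapDeriv (b : ι → F) (z : EuclideanSpace ℂ (ι ⊕ ι)) :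
    EuclideanSpace ℂ (ι ⊕ ι) →L[ℂ] F :=
  ∑ j, ContinuousLinearMap.smulRight
    (z (inl j) • EuclideanSpace.proj (𝕜 := ℂ) (inr j) +
      z (inr j) • EuclideanSpace.proj (𝕜 := ℂ) (inl j)) (b j)

theorem hasFDerivAt_momentMap (b : ι → F) (α : F) (z : EuclideanSpace ℂ (ι ⊕ ι)) :
    HasFDerivAt (momentMap b α) (momentMapDeriv b z) z := by
  refine (HasFDerivAt.fun_sum fun j _ => ?_).sub_const α
  exact ((PiLp.hasFDerivAt_apply (𝕜 := ℂ) 2 z (inl j)).mul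
    (PiLp.hasFDerivAt_apply (𝕜 := ℂ) 2 z (inr j))).smul_const (b j)

theorem inner_momentMapDeriv_apply (b : ι → F) (m : F) (z v : EuclideanSpace ℂ (ι ⊕ ι)) :
    ⟪m, momentMapDeriv b z v⟫_ℂ = ⟪conjSwapSMul (fun j => ⟪b j, m⟫_ℂ) z, v⟫_ℂ := by
  simp only [momentMapDeriv, sum_apply, ContinuousLinearMap.smulRight_apply, add_apply, smul_apply,
    PiLp.proj_apply, smul_eq_mul, inner_sum, inner_smul_right, conjSwapSMul, PiLp.inner_apply,
    RCLike.inner_apply, Fintype.sum_sum_type, elim_inl, elim_inr, map_mul, inner_conj_symm,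
    Complex.conj_conj]
  rw [← Finset.sum_add_distrib]
  exact Finset.sum_congr rfl fun j _ => by ring

theorem hasGradientAt_norm_sq_momentMap (b : ι → F) (α : F) (z : EuclideanSpace ℂ (ι ⊕ ι)) :
    HasGradientAt (fun w => ‖momentMap b α w‖ ^ 2)
      ((2 : ℝ) • conjSwapSMul (fun j => ⟪b j, momentMap b α z⟫_ℂ) z) z := by
  -- `F` carries no real inner product instance; the statement only involves its norm.
  let _ : InnerProductSpace ℝ F := InnerProductSpace.complexToReal
  refine ((hasFDerivAt_momentMap b α z).restrictScalars ℝ).hasGradientAt_norm_sq fun v => ?_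
  rw [real_inner_smul_left, EuclideanSpace.real_inner_eq_re_inner, real_inner_eq_re_inner ℂ,
    ContinuousLinearMap.coe_restrictScalars', inner_momentMapDeriv_apply]
  norm_num

end Hypertoric

open Hypertoric

/-- **Norm of the gradient of `‖μ_c‖²` and the critical point equations on a hypertoric
variety.**  On `T*ℂᴺ = ℂᴺ × ℂᴺ` (modelled as `EuclideanSpace ℂ (Fin N ⊕ Fin N)`, with
`x j = z (Sum.inl j)`, `y j = z (Sum.inr j)`), let
`μ_c (x,y) = ∑ⱼ xⱼ yⱼ βⱼ - α_ℂ` and `f = ‖μ_c‖²`.  Then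
`‖∇f(x,y)‖² = 4 ∑ⱼ (|xⱼ|² + |yⱼ|²) |⟨βⱼ, μ_c(x,y)⟩|²`, and `(x,y)` is a critical
point of `f` iff for every `j` either `(xⱼ, yⱼ) = (0,0)` or `⟨βⱼ, μ_c(x,y)⟩ = 0`. -/
theorem stmt_18
    (N r : ℕ) (β : Fin N → Fin r → ℝ) (αC : EuclideanSpace ℂ (Fin r))
    (μc : EuclideanSpace ℂ (Fin N ⊕ Fin N) → EuclideanSpace ℂ (Fin r))
    (hμc : ∀ z : EuclideanSpace ℂ (Fin N ⊕ Fin N), ∀ a : Fin r,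
      μc z a = (∑ j, z (Sum.inl j) * z (Sum.inr j) * (β j a : ℂ)) - αC a)
    (f : EuclideanSpace ℂ (Fin N ⊕ Fin N) → ℝ)
    (hf : ∀ z, f z = ‖μc z‖ ^ 2)
    (z : EuclideanSpace ℂ (Fin N ⊕ Fin N)) :
    ‖gradient f z‖ ^ 2 =
      4 * ∑ j, (‖z (Sum.inl j)‖ ^ 2 + ‖z (Sum.inr j)‖ ^ 2) *
        ‖∑ a, (β j a : ℂ) * μc z a‖ ^ 2 ∧
    (gradient f z = 0 ↔
      ∀ j : Fin N, (z (Sum.inl j) = 0 ∧ z (Sum.inr j) = 0) ∨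
        (∑ a, (β j a : ℂ) * μc z a) = 0) := by
  set b : Fin N → EuclideanSpace ℂ (Fin r) := fun j => WithLp.toLp 2 fun a => (β j a : ℂ)
  have hμ : μc = momentMap b αC := by
    funext w; ext a; simp [momentMap, hμc, b]
  have hpairing : ∀ j, ∑ a, (β j a : ℂ) * μc z a = ⟪b j, μc z⟫_ℂ := by
    intro j; simp [b, PiLp.inner_apply, mul_comm]
  have hgrad : gradient f z = (2 : ℝ) • conjSwapSMul (fun j => ⟪b j, μc z⟫_ℂ) z := by
    rw [show f = fun w => ‖μc w‖ ^ 2 from funext hf, hμ]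
    exact (hasGradientAt_norm_sq_momentMap b αC z).gradient
  simp only [hpairing, hgrad, norm_smul, mul_pow, norm_sq_conjSwapSMul, smul_eq_zero, two_ne_zero,
    false_or, conjSwapSMul_eq_zero_iff]
  norm_num
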